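/- For every integer n ≥ 2 and every integer k with 1 ≤ k ≤ F_{n−1}, one has Z(F_n + k) = F_{n+2} + Z(k), where F_m denotes the m-th Fibonacci number. -/

import Mathlib

/-!
Splitting off the leading bit: for `y < 2 ^ (m + 1)`, the number `2 ^ (m + 1) + y` is fibbinary
iff `y < 2 ^ m` and `y` is fibbinary, and it has the parity of `y`. Hence, by the Fibonacci
recurrence, there are `F (m + 2)` fibbinary numbers (counting `0`) and `F m` odd ones below
`2 ^ m`. So the odd fibbinary numbers with leading bit `2 ^ n` are the `2 ^ n + odfib k` with
`1 ≤ k ≤ F (n - 1)`, giving `odfib (F n + k) = 2 ^ n + odfib k`. Finally `Z n` is the number of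
fibbinary numbers below `odfib n` (`0` included), and counting those below `2 ^ n + odfib k`
gives `F (n + 2) + Z k`.
-/

/-- A natural number is *fibbinary* if its binary representation
contains no two consecutive ones. -/
def IsFibbinary (m : ℕ) : Prop :=
  ∀ i : ℕ, ¬(m.testBit i = true ∧ m.testBit (i + 1) = true)

/-- `fibbin n` is the `n`-th fibbinary number, i.e. the `n`-th positive integer
(1-indexed, in increasing order) whose binary representation has no two
consecutive ones. -/
noncomputable def fibbin (n : ℕ) : ℕ :=
  Nat.nth (fun m => 0 < m ∧ IsFibbinary m) (n - 1)

/-- `odfib n` is the `n`-th odd fibbinary number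
(1-indexed, in increasing order). -/
noncomputable def odfib (n : ℕ) : ℕ :=
  Nat.nth (fun m => Odd m ∧ IsFibbinary m) (n - 1)

/-- `Z n` is the index `j` such that the `j`-th fibbinary number equals the
`n`-th odd fibbinary number, i.e. `Z n = fibbin⁻¹ (odfib n)`. -/
noncomputable def Z (n : ℕ) : ℕ :=
  sInf {j : ℕ | 1 ≤ j ∧ fibbin j = odfib n}

open Nat

namespace Nat

variable {p q : ℕ → Prop} [DecidablePred p] [DecidablePred q]

theorem count_congr {n : ℕ} (h : ∀ k < n, p k ↔ q k) : count p n = count q n :=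
  le_antisymm (count_mono_left fun k hk => (h k hk).1) (count_mono_left fun k hk => (h k hk).2)

theorem count_add_of_forall_iff {a b : ℕ} (h : ∀ k < b, p (a + k) ↔ p k) :
    count p (a + b) = count p a + count p b := by
  rw [count_add, count_congr h]

theorem count_lt_and_of_le {a b : ℕ} (hab : a ≤ b) :
    count (fun k => k < a ∧ p k) b = count p a := by
  obtain ⟨d, rfl⟩ := Nat.exists_eq_add_of_le hab
  rw [count_add, count_of_forall_not (n := d) (by omega), add_zero]
  exact count_congr fun k hk => by simp [hk]

theorem count_pos_and_add_one (h0 : p 0) (n : ℕ) :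
    count (fun m => 0 < m ∧ p m) (n + 1) + 1 = count p (n + 1) := by
  simp [count_succ', h0]

theorem sInf_nth_sub_one_eq_count_add_one (hp : (Set.ofPred p).Infinite) {x : ℕ} (hx : p x) :
    sInf {j | 1 ≤ j ∧ nth p (j - 1) = x} = count p x + 1 := by
  suffices {j | 1 ≤ j ∧ nth p (j - 1) = x} = {count p x + 1} by rw [this, csInf_singleton]
  ext j
  rw [Set.mem_ofPred_eq, Set.mem_singleton_iff]
  constructor
  · rintro ⟨hj, hnth⟩
    have := nth_injective hp (hnth.trans (nth_count hx).symm)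
    omega
  · rintro rfl
    simp [nth_count hx]

theorem eq_fib_add_of_recurrence {f : ℕ → ℕ} {j : ℕ} (h0 : f 0 = fib j) (h1 : f 1 = fib (j + 1))
    (h : ∀ m, f (m + 2) = f (m + 1) + f m) (m : ℕ) : f m = fib (m + j) := by
  induction m using Nat.twoStepInduction with
  | zero => simpa
  | one => simpa [add_comm]
  | more m ih0 ih1 =>
    rw [h, ih0, ih1, show m + 2 + j = (m + j) + 2 by omega, fib_add_two, add_comm, add_right_comm]

theorem count_two_pow_add_two
    (hp : ∀ m y, y < 2 ^ (m + 1) → (p (2 ^ (m + 1) + y) ↔ y < 2 ^ m ∧ p y)) (m : ℕ) :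
    count p (2 ^ (m + 2)) = count p (2 ^ (m + 1)) + count p (2 ^ m) := by
  rw [pow_succ _ (m + 1), mul_two, count_add, count_congr (hp m),
    count_lt_and_of_le (Nat.pow_le_pow_right two_pos m.le_succ)]

theorem testBit_two_pow_add_of_lt {m y : ℕ} (hy : y < 2 ^ m) (j : ℕ) :
    (2 ^ m + y).testBit j = (decide (m = j) || y.testBit j) := by
  rw [← mul_one (2 ^ m), two_pow_add_eq_or_of_lt hy, mul_one, testBit_or, testBit_two_pow]

theorem lt_two_pow_iff_testBit_eq_false {m y : ℕ} (hy : y < 2 ^ (m + 1)) :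
    y < 2 ^ m ↔ y.testBit m = false := by
  refine ⟨testBit_lt_two_pow, fun h => lt_pow_two_of_testBit y fun i hi => ?_⟩
  rcases hi.eq_or_lt with rfl | hi
  · exact h
  · exact testBit_lt_two_pow (hy.trans_le (Nat.pow_le_pow_right two_pos hi))

end Nat

open scoped Classical

theorem isFibbinary_zero : IsFibbinary 0 := by
  simp [IsFibbinary]

theorem isFibbinary_one : IsFibbinary 1 := fun i h => by
  simpa [testBit_lt_two_pow (Nat.one_lt_two_pow (succ_ne_zero i))] using h.2

theorem isFibbinary_two_pow_succ_add {m y : ℕ} (hy : y < 2 ^ (m + 1)) :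
    IsFibbinary (2 ^ (m + 1) + y) ↔ y < 2 ^ m ∧ IsFibbinary y := by
  have hhigh : ∀ j, m + 1 ≤ j → y.testBit j = false := fun j hj =>
    testBit_lt_two_pow (hy.trans_le (Nat.pow_le_pow_right two_pos hj))
  simp only [IsFibbinary, lt_two_pow_iff_testBit_eq_false hy, testBit_two_pow_add_of_lt hy,
    Bool.or_eq_true, decide_eq_true_eq]
  constructor
  · intro h
    refine ⟨Bool.eq_false_iff.2 fun hm => h m ⟨Or.inr hm, Or.inl rfl⟩, fun i hi => h i ⟨?_, ?_⟩⟩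
    · exact Or.inr hi.1
    · exact Or.inr hi.2
  · rintro ⟨hm, hy⟩ i ⟨hi | hi, hi' | hi'⟩
    · omega
    · simp [hhigh (i + 1) (by omega)] at hi'
    · obtain rfl : m = i := by omega
      simp [hm] at hi
    · exact hy i ⟨hi, hi'⟩

theorem isFibbinary_two_pow_succ_add_of_lt {m y : ℕ} (hy : y < 2 ^ m) :
    IsFibbinary (2 ^ (m + 1) + y) ↔ IsFibbinary y :=
  (isFibbinary_two_pow_succ_add (hy.trans (Nat.pow_lt_pow_right one_lt_two (lt_add_one m)))).trans
    (and_iff_right hy)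

theorem odd_and_isFibbinary_two_pow_succ_add {m y : ℕ} (hy : y < 2 ^ (m + 1)) :
    (Odd (2 ^ (m + 1) + y) ∧ IsFibbinary (2 ^ (m + 1) + y)) ↔
      y < 2 ^ m ∧ Odd y ∧ IsFibbinary y := by
  have hodd : Odd (2 ^ (m + 1) + y) ↔ Odd y := by simp [Nat.odd_add', Nat.even_pow]
  rw [hodd, isFibbinary_two_pow_succ_add hy]
  tauto

theorem odd_and_isFibbinary_two_pow_succ_add_of_lt {m y : ℕ} (hy : y < 2 ^ m) :
    (Odd (2 ^ (m + 1) + y) ∧ IsFibbinary (2 ^ (m + 1) + y)) ↔ Odd y ∧ IsFibbinary y :=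
  (odd_and_isFibbinary_two_pow_succ_add
    (hy.trans (Nat.pow_lt_pow_right one_lt_two (lt_add_one m)))).trans (and_iff_right hy)

theorem count_isFibbinary_two_pow (m : ℕ) : count IsFibbinary (2 ^ m) = fib (m + 2) :=
  eq_fib_add_of_recurrence (f := fun m => count IsFibbinary (2 ^ m))
    (by simp [count_one, isFibbinary_zero])
    (by simp [count_succ, isFibbinary_zero, isFibbinary_one, fib_add_two])
    (count_two_pow_add_two fun _ _ => isFibbinary_two_pow_succ_add) m

theorem count_odd_isFibbinary_two_pow (m : ℕ) :
    count (fun y => Odd y ∧ IsFibbinary y) (2 ^ m) = fib m :=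
  eq_fib_add_of_recurrence (f := fun m => count (fun y => Odd y ∧ IsFibbinary y) (2 ^ m))
    (j := 0) (by simp [count_one]) (by simp [count_succ, isFibbinary_one])
    (count_two_pow_add_two fun _ _ => odd_and_isFibbinary_two_pow_succ_add) m

theorem infinite_odd_isFibbinary : (Set.ofPred fun y => Odd y ∧ IsFibbinary y).Infinite := by
  refine Set.infinite_of_forall_exists_gt fun a => ⟨2 ^ (a + 2) + 1, ?_, ?_⟩
  · exact (odd_and_isFibbinary_two_pow_succ_add_of_lt (Nat.one_lt_two_pow (succ_ne_zero a))).2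
      ⟨odd_one, isFibbinary_one⟩
  · have := Nat.lt_two_pow_self (n := a + 2)
    omega

theorem odd_isFibbinary_odfib (n : ℕ) : Odd (odfib n) ∧ IsFibbinary (odfib n) :=
  nth_mem_of_infinite infinite_odd_isFibbinary _

theorem odfib_lt_two_pow {m k : ℕ} (hk1 : 1 ≤ k) (hk2 : k ≤ fib m) : odfib k < 2 ^ m :=
  nth_lt_of_lt_count (by rw [count_odd_isFibbinary_two_pow]; omega)

theorem Z_eq_count (n : ℕ) : Z n = count IsFibbinary (odfib n) := by
  obtain ⟨hodd, hfib⟩ := odd_isFibbinary_odfib n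
  have hpos : (Set.ofPred fun m => 0 < m ∧ IsFibbinary m).Infinite :=
    infinite_odd_isFibbinary.mono fun y hy => ⟨hy.1.pos, hy.2⟩
  obtain ⟨x, hx⟩ := Nat.exists_eq_add_one_of_ne_zero hodd.pos.ne'
  unfold Z fibbin
  rw [sInf_nth_sub_one_eq_count_add_one hpos ⟨hodd.pos, hfib⟩, hx,
    count_pos_and_add_one isFibbinary_zero]

theorem odfib_fib_add {m k : ℕ} (hk1 : 1 ≤ k) (hk2 : k ≤ fib m) :
    odfib (fib (m + 1) + k) = 2 ^ (m + 1) + odfib k := by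
  have hlt := odfib_lt_two_pow hk1 hk2
  have hcount : count (fun y => Odd y ∧ IsFibbinary y) (2 ^ (m + 1) + odfib k) =
      fib (m + 1) + k - 1 := by
    rw [count_add_of_forall_iff fun y hy => odd_and_isFibbinary_two_pow_succ_add_of_lt
      (hy.trans hlt), count_odd_isFibbinary_two_pow, odfib,
      count_nth_of_infinite infinite_odd_isFibbinary]
    omega
  rw [odfib, ← hcount]
  exact nth_count ((odd_and_isFibbinary_two_pow_succ_add_of_lt hlt).2 (odd_isFibbinary_odfib k))

theorem Z_fib_add_general (n k : ℕ) (hk1 : 1 ≤ k)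
    (hk2 : k ≤ Nat.fib (n - 1)) :
    Z (Nat.fib n + k) = Nat.fib (n + 2) + Z k := by
  obtain ⟨m, rfl⟩ : ∃ m, n = m + 1 :=
    Nat.exists_eq_add_one_of_ne_zero fun h => by simp [h] at hk2; omega
  rw [add_tsub_cancel_right] at hk2
  have hlt := odfib_lt_two_pow hk1 hk2
  rw [Z_eq_count, Z_eq_count, odfib_fib_add hk1 hk2, count_add_of_forall_iff fun y hy =>
    isFibbinary_two_pow_succ_add_of_lt (hy.trans hlt), count_isFibbinary_two_pow]

/-- For `n ≥ 2` and `1 ≤ k ≤ F_{n−1}`, `Z (F_n + k) = F_{n+2} + Z k`. -/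
theorem Z_fib_add (n k : ℕ) (hn : 2 ≤ n) (hk1 : 1 ≤ k)
    (hk2 : k ≤ Nat.fib (n - 1)) :
    Z (Nat.fib n + k) = Nat.fib (n + 2) + Z k :=
  Z_fib_add_general n k hk1 hk2
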